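/- arXiv:math-ph/0210029 — 2 statements merged into one kernel-verified Lean document; each statement's English description precedes it below -/
import Mathlib

section
/- Let ρ > 0, R > 0, A > 0 and let g be holomorphic on Ω := {t ∈ ℂ : Im t > 0, Re t > −ρ} ∪ {t ∈ ℂ : |t| < ρ}, and assume |g(t + iη)| ≤ A η^{−1} e^{t/R} for all t > 0 and all η ∈ (0, ρ). Then for every z ∈ C_R := {z ∈ ℂ : Re(1/z) > 1/R}, the one-sided limit Φ(z) := lim_{ε→0⁺} (1/z) ∫₀^∞ g(t + iε) e^{−t/z} dt exists, and the function z ↦ Φ(z) is holomorphic on C_R. -/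
/-!
Put `s = 1 / z`. Cauchy's theorem on the rectangles `[0, T] × [ε, δ]`, whose right side
vanishes as `T → ∞` by the growth bound (this is where `Re s > 1 / R` enters), moves the ray
`ℝ₊ + iε` to the ray `ℝ₊ + iδ` plus the segment `[iε, iδ]`. As `ε → 0⁺` the segment tends to
`[0, iδ]`, which lies in the disk where `g` is holomorphic, so
`Φ(z) = (1/z) (∫₀^∞ g(t + iδ) e^{-(t + iδ) s} dt + i ∫₀^δ g(iy) e^{-iys} dy)`.
Both pieces are integrals `∫ h e^{-w s} dμ`, holomorphic in `s` by differentiation under the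
integral sign.
-/

open MeasureTheory Filter Set Complex Topology

theorem norm_cexp_neg_mul_le_of_dist_le (w : ℂ) {s s₀ : ℂ} {r : ℝ} (hs : dist s s₀ ≤ r) :
    ‖cexp (-(w * s))‖ ≤ Real.exp (r * ‖w‖ - (w * s₀).re) := by
  rw [norm_exp, Real.exp_le_exp]
  have hdiff : ‖w * (s - s₀)‖ ≤ r * ‖w‖ := by
    rw [norm_mul, mul_comm r]
    exact mul_le_mul_of_nonneg_left (by rwa [← dist_eq_norm]) (norm_nonneg w)
  have hre := neg_le_of_abs_le ((abs_re_le_norm _).trans hdiff)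
  have : w * s = w * s₀ + w * (s - s₀) := by ring
  rw [this, neg_re, add_re]
  linarith

theorem mul_exp_le_exp_two_mul {x r : ℝ} (hr : 0 < r) :
    x * Real.exp (r * x) ≤ r⁻¹ * Real.exp (2 * r * x) := by
  have hx : r * x ≤ Real.exp (r * x) := by linarith [Real.add_one_le_exp (r * x)]
  calc x * Real.exp (r * x) = r⁻¹ * ((r * x) * Real.exp (r * x)) := by field_simp
    _ ≤ r⁻¹ * (Real.exp (r * x) * Real.exp (r * x)) := by gcongr
    _ = r⁻¹ * Real.exp (2 * r * x) := by rw [← Real.exp_add]; ring_nf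

/-- The weight `exp (r ‖w‖)` pays both for moving `s` in the ball of radius `r / 2` around `s₀`
and, through `mul_exp_le_exp_two_mul`, for the factor `w` of the derivative. -/
theorem differentiableAt_integral_mul_cexp_neg_mul {α : Type*} [MeasurableSpace α]
    {μ : Measure α} {h w : α → ℂ} (hh : AEStronglyMeasurable h μ)
    (hw : AEStronglyMeasurable w μ) {s₀ : ℂ} {r : ℝ} (hr : 0 < r)
    (hint : Integrable (fun a => ‖h a‖ * Real.exp (r * ‖w a‖ - (w a * s₀).re)) μ) :
    DifferentiableAt ℂ (fun s => ∫ a, h a * cexp (-(w a * s)) ∂μ) s₀ := by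
  have hexp : ∀ s : ℂ, AEStronglyMeasurable (fun a => cexp (-(w a * s))) μ := fun s =>
    (continuous_exp.comp (continuous_id.mul continuous_const).neg).comp_aestronglyMeasurable hw
  have hball : ∀ s ∈ Metric.ball s₀ (r / 2), ∀ a, ‖h a * (cexp (-(w a * s)) * -w a)‖
      ≤ (r / 2)⁻¹ * (‖h a‖ * Real.exp (r * ‖w a‖ - (w a * s₀).re)) := by
    intro s hs a
    rw [norm_mul, norm_mul, norm_neg]
    calc ‖h a‖ * (‖cexp (-(w a * s))‖ * ‖w a‖)
        ≤ ‖h a‖ * (Real.exp (r / 2 * ‖w a‖ - (w a * s₀).re) * ‖w a‖) := by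
          gcongr
          exact norm_cexp_neg_mul_le_of_dist_le (w a) (Metric.mem_ball.1 hs).le
      _ = ‖h a‖ * ((‖w a‖ * Real.exp (r / 2 * ‖w a‖)) * Real.exp (-(w a * s₀).re)) := by
          rw [sub_eq_add_neg, Real.exp_add]; ring
      _ ≤ ‖h a‖ * (((r / 2)⁻¹ * Real.exp (2 * (r / 2) * ‖w a‖)) * Real.exp (-(w a * s₀).re)) := by
          gcongr ‖h a‖ * (?_ * _)
          exact mul_exp_le_exp_two_mul (half_pos hr)
      _ = (r / 2)⁻¹ * (‖h a‖ * Real.exp (r * ‖w a‖ - (w a * s₀).re)) := by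
          rw [sub_eq_add_neg, Real.exp_add (r * _)]; ring_nf
  have hint₀ : Integrable (fun a => h a * cexp (-(w a * s₀))) μ := by
    refine hint.mono' (hh.mul (hexp s₀)) (Eventually.of_forall fun a => ?_)
    rw [norm_mul]
    gcongr
    exact norm_cexp_neg_mul_le_of_dist_le (w a) (by simp [hr.le] : dist s₀ s₀ ≤ r)
  exact (hasDerivAt_integral_of_dominated_loc_of_deriv_le (Metric.ball_mem_nhds s₀ (half_pos hr))
    (Eventually.of_forall fun s => hh.mul (hexp s)) hint₀
    (F' := fun s a => h a * (cexp (-(w a * s)) * -w a)) (hh.mul ((hexp s₀).mul hw.neg))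
    (Eventually.of_forall fun a s hs => hball s hs a) (hint.const_mul _)
    (Eventually.of_forall fun a s _ => by
      simpa using ((hasDerivAt_id s).const_mul (w a)).neg.cexp.const_mul (h a))).2.differentiableAt

def HasStripBound (ρ R A : ℝ) (g : ℂ → ℂ) : Prop :=
  ∀ t : ℝ, 0 < t → ∀ η : ℝ, η ∈ Ioo 0 ρ →
    ‖g ((t : ℂ) + (η : ℂ) * I)‖ ≤ A * η⁻¹ * Real.exp (t / R)

noncomputable def rayIntegral (g : ℂ → ℂ) (η : ℝ) (s : ℂ) : ℂ :=
  ∫ t in Ioi (0 : ℝ), g (t + η * I) * cexp (-((t + η * I) * s))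

noncomputable def segmentIntegral (g : ℂ → ℂ) (a b : ℝ) (s : ℂ) : ℂ :=
  ∫ y in a..b, g (y * I) * cexp (-(y * I * s))

theorem differentiable_segmentIntegral {g : ℂ → ℂ} {a b : ℝ} (hab : a ≤ b)
    (hg : ContinuousOn (fun y : ℝ => g (y * I)) (Icc a b)) :
    Differentiable ℂ (segmentIntegral g a b) := by
  intro s
  have hseg : segmentIntegral g a b = fun s => ∫ y in Ioc a b, g (y * I) * cexp (-(y * I * s)) :=
    funext fun s => intervalIntegral.integral_of_le hab
  rw [hseg]
  exact differentiableAt_integral_mul_cexp_neg_mul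
    ((hg.mono Ioc_subset_Icc_self).aestronglyMeasurable measurableSet_Ioc)
    (by fun_prop : Continuous fun y : ℝ => (y : ℂ) * I).aestronglyMeasurable one_pos
    ((ContinuousOn.integrableOn_Icc (hg.norm.mul (by fun_prop))).mono_set Ioc_subset_Icc_self)

theorem integral_mul_cexp_neg_div_eq_rayIntegral (g : ℂ → ℂ) (ε : ℝ) (z : ℂ) :
    ∫ t in Ioi (0 : ℝ), g (t + ε * I) * cexp (-t / z)
      = rayIntegral g ε (1 / z) * cexp (ε * I * (1 / z)) := by
  rw [rayIntegral, ← integral_mul_const]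
  refine integral_congr_ae (Eventually.of_forall fun t => ?_)
  simp only [mul_assoc, ← Complex.exp_add]
  ring_nf

section Strip

variable {ρ R A : ℝ} {g : ℂ → ℂ}

theorem HasStripBound.norm_mul_exp_le (hbound : HasStripBound ρ R A g)
    {t η r : ℝ} (ht : 0 < t) (hη : η ∈ Ioo 0 ρ) (hr : 0 ≤ r) (s : ℂ) :
    ‖g (t + η * I)‖ * Real.exp (r * ‖(t : ℂ) + η * I‖ - ((t + η * I) * s).re)
      ≤ A * η⁻¹ * Real.exp (η * (r + s.im)) * Real.exp (-(s.re - 1 / R - r) * t) := by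
  have hnorm : ‖(t : ℂ) + η * I‖ ≤ t + η := by
    refine (norm_add_le _ _).trans ?_
    simp [abs_of_pos ht, abs_of_pos hη.1]
  have hre : ((t + η * I) * s).re = t * s.re - η * s.im := by simp
  calc ‖g (t + η * I)‖ * Real.exp (r * ‖(t : ℂ) + η * I‖ - ((t + η * I) * s).re)
      ≤ A * η⁻¹ * Real.exp (t / R) * Real.exp (r * (t + η) - (t * s.re - η * s.im)) := by
        have hgt := hbound t ht η hη
        rw [hre]
        exact mul_le_mul hgt (Real.exp_le_exp.2 (by gcongr)) (Real.exp_pos _).le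
          ((norm_nonneg _).trans hgt)
    _ = A * η⁻¹ * Real.exp (η * (r + s.im)) * Real.exp (-(s.re - 1 / R - r) * t) := by
        rw [mul_assoc _ (Real.exp _), ← Real.exp_add, mul_assoc _ (Real.exp _), ← Real.exp_add]
        ring_nf

theorem HasStripBound.norm_rayIntegrand_le (hbound : HasStripBound ρ R A g)
    {t η : ℝ} (ht : 0 < t) (hη : η ∈ Ioo 0 ρ) (s : ℂ) :
    ‖g (t + η * I) * cexp (-((t + η * I) * s))‖
      ≤ A * η⁻¹ * Real.exp (η * s.im) * Real.exp (-(s.re - 1 / R) * t) := by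
  simpa [norm_exp] using hbound.norm_mul_exp_le ht hη le_rfl s

theorem continuousOn_comp_horizontal (hg : ContinuousOn g {w : ℂ | 0 ≤ w.re ∧ 0 < w.im})
    {η : ℝ} (hη : 0 < η) : ContinuousOn (fun t : ℝ => g (t + η * I)) (Ici 0) :=
  hg.comp (by fun_prop) fun t ht => by simp [mem_Ici.1 ht, hη]

theorem integrableOn_norm_mul_exp_ray (hg : ContinuousOn g {w : ℂ | 0 ≤ w.re ∧ 0 < w.im})
    (hbound : HasStripBound ρ R A g)
    {η r : ℝ} (hη : η ∈ Ioo 0 ρ) (hr : 0 ≤ r) {s : ℂ} (hs : r < s.re - 1 / R) :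
    IntegrableOn (fun t : ℝ =>
      ‖g (t + η * I)‖ * Real.exp (r * ‖(t : ℂ) + η * I‖ - ((t + η * I) * s).re)) (Ioi 0) := by
  have hgc := (continuousOn_comp_horizontal hg hη.1).mono Ioi_subset_Ici_self
  refine ((exp_neg_integrableOn_Ioi 0 (sub_pos.2 hs)).const_mul
    (A * η⁻¹ * Real.exp (η * (r + s.im)))).mono' ?_ ?_
  · exact (hgc.norm.mul (by fun_prop)).aestronglyMeasurable measurableSet_Ioi
  · filter_upwards [ae_restrict_mem measurableSet_Ioi] with t ht
    rw [Real.norm_of_nonneg (by positivity)]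
    exact hbound.norm_mul_exp_le ht hη hr s

theorem integrableOn_rayIntegrand (hg : ContinuousOn g {w : ℂ | 0 ≤ w.re ∧ 0 < w.im})
    (hbound : HasStripBound ρ R A g)
    {η : ℝ} (hη : η ∈ Ioo 0 ρ) {s : ℂ} (hs : 1 / R < s.re) :
    IntegrableOn (fun t : ℝ => g (t + η * I) * cexp (-((t + η * I) * s))) (Ioi 0) := by
  refine (integrableOn_norm_mul_exp_ray hg hbound hη le_rfl (sub_pos.2 hs)).mono' ?_ ?_
  · exact ((continuousOn_comp_horizontal hg hη.1).mono Ioi_subset_Ici_self |>.mul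
      (by fun_prop)).aestronglyMeasurable measurableSet_Ioi
  · filter_upwards with t
    simp [norm_exp]

theorem differentiableAt_rayIntegral (hg : ContinuousOn g {w : ℂ | 0 ≤ w.re ∧ 0 < w.im})
    (hbound : HasStripBound ρ R A g)
    {η : ℝ} (hη : η ∈ Ioo 0 ρ) {s : ℂ} (hs : 1 / R < s.re) :
    DifferentiableAt ℂ (rayIntegral g η) s :=
  differentiableAt_integral_mul_cexp_neg_mul
    (((continuousOn_comp_horizontal hg hη.1).mono Ioi_subset_Ici_self).aestronglyMeasurable
      measurableSet_Ioi)
    (by fun_prop : Continuous fun t : ℝ => (t : ℂ) + η * I).aestronglyMeasurable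
    (half_pos (sub_pos.2 hs))
    (integrableOn_norm_mul_exp_ray hg hbound hη (half_pos (sub_pos.2 hs)).le
      (half_lt_self (sub_pos.2 hs)))

theorem tendsto_integral_vertical_atTop_zero
    (hbound : HasStripBound ρ R A g)
    {ε δ : ℝ} (hε : 0 < ε) (hεδ : ε ≤ δ) (hδ : δ < ρ) {s : ℂ} (hs : 1 / R < s.re) :
    Tendsto (fun T : ℝ => ∫ y in ε..δ, g (T + y * I) * cexp (-((T + y * I) * s))) atTop
      (𝓝 0) := by
  have hcont : ContinuousOn (fun y : ℝ => A * y⁻¹ * Real.exp (y * s.im)) (Icc ε δ) :=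
    (continuousOn_const.mul (continuousOn_inv₀.mono fun y hy => (hε.trans_le hy.1).ne')).mul
      (by fun_prop)
  obtain ⟨K, hK⟩ := isCompact_Icc.exists_bound_of_continuousOn hcont
  have hdecay :
      Tendsto (fun T : ℝ => K * Real.exp (-(s.re - 1 / R) * T) * |δ - ε|) atTop (𝓝 0) := by
    simpa using ((Real.tendsto_exp_atBot.comp
      (tendsto_id.const_mul_atTop_of_neg (neg_neg_of_pos (sub_pos.2 hs)))).const_mul K).mul_const _
  refine squeeze_zero_norm' ?_ hdecay
  filter_upwards [eventually_gt_atTop 0] with T hT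
  refine intervalIntegral.norm_integral_le_of_norm_le_const fun y hy => ?_
  have hy' : y ∈ Icc ε δ := Ioc_subset_Icc_self (uIoc_of_le hεδ ▸ hy)
  calc _ ≤ A * y⁻¹ * Real.exp (y * s.im) * Real.exp (-(s.re - 1 / R) * T) :=
        hbound.norm_rayIntegrand_le hT ⟨hε.trans_le hy'.1, hy'.2.trans_lt hδ⟩ s
    _ ≤ K * Real.exp (-(s.re - 1 / R) * T) := by
        gcongr
        exact (le_abs_self _).trans (by simpa using hK y hy')

theorem rayIntegral_eq_add_segmentIntegral
    (hg : DifferentiableOn ℂ g {w : ℂ | 0 ≤ w.re ∧ 0 < w.im}) (hbound : HasStripBound ρ R A g)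
    {ε δ : ℝ} (hε : 0 < ε) (hεδ : ε ≤ δ) (hδ : δ < ρ) {s : ℂ} (hs : 1 / R < s.re) :
    rayIntegral g ε s = rayIntegral g δ s + I * segmentIntegral g ε δ s := by
  set f : ℂ → ℂ := fun w => g w * cexp (-(w * s))
  have hrect : ∀ T : ℝ, 0 < T →
      (∫ x in (0 : ℝ)..T, f (x + ε * I)) - (∫ x in (0 : ℝ)..T, f (x + δ * I))
        + I * (∫ y in ε..δ, f (T + y * I)) - I * segmentIntegral g ε δ s = 0 := by
    intro T hT
    have hf : DifferentiableOn ℂ f (uIcc 0 T ×ℂ uIcc ε δ) := by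
      refine (hg.mono fun w hw => ?_).mul (by fun_prop)
      rw [mem_reProdIm, uIcc_of_le hT.le, uIcc_of_le hεδ] at hw
      exact ⟨hw.1.1, hε.trans_le hw.2.1⟩
    have h := integral_boundary_rect_eq_zero_of_differentiableOn f ⟨0, ε⟩ ⟨T, δ⟩ hf
    simp only [ofReal_zero, zero_add, smul_eq_mul] at h
    exact h
  have hlim : Tendsto (fun T : ℝ => (∫ x in (0 : ℝ)..T, f (x + ε * I))
      - (∫ x in (0 : ℝ)..T, f (x + δ * I)) + I * (∫ y in ε..δ, f (T + y * I))
      - I * segmentIntegral g ε δ s) atTop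
      (𝓝 (rayIntegral g ε s - rayIntegral g δ s + I * 0 - I * segmentIntegral g ε δ s)) :=
    (((intervalIntegral_tendsto_integral_Ioi 0
        (integrableOn_rayIntegrand hg.continuousOn hbound ⟨hε, hεδ.trans_lt hδ⟩ hs) tendsto_id).sub
      (intervalIntegral_tendsto_integral_Ioi 0
        (integrableOn_rayIntegrand hg.continuousOn hbound ⟨hε.trans_le hεδ, hδ⟩ hs) tendsto_id)).add
      ((tendsto_integral_vertical_atTop_zero hbound hε hεδ hδ hs).const_mul I)).sub_const _
  have h0 := tendsto_nhds_unique hlim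
    (tendsto_const_nhds.congr' (eventually_gt_atTop 0 |>.mono fun T hT => (hrect T hT).symm))
  linear_combination h0

theorem tendsto_rayIntegral_mul_cexp
    (hg : DifferentiableOn ℂ g {w : ℂ | 0 ≤ w.re ∧ 0 < w.im}) (hbound : HasStripBound ρ R A g)
    {δ : ℝ} (hδ : δ ∈ Ioo 0 ρ) (hseg : ContinuousOn (fun y : ℝ => g (y * I)) (Icc 0 δ))
    {s : ℂ} (hs : 1 / R < s.re) :
    Tendsto (fun ε : ℝ => rayIntegral g ε s * cexp (ε * I * s)) (𝓝[>] 0)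
      (𝓝 (rayIntegral g δ s + I * segmentIntegral g 0 δ s)) := by
  have hshift : ∀ᶠ ε in 𝓝[>] (0 : ℝ),
      rayIntegral g ε s * cexp (ε * I * s)
        = (rayIntegral g δ s + I * segmentIntegral g ε δ s) * cexp (ε * I * s) := by
    filter_upwards [Ioo_mem_nhdsGT hδ.1] with ε hε
    rw [rayIntegral_eq_add_segmentIntegral hg hbound hε.1 hε.2.le hδ.2 hs]
  have hsegment :
      Tendsto (fun ε => segmentIntegral g ε δ s) (𝓝[>] 0) (𝓝 (segmentIntegral g 0 δ s)) := by
    have hcont := intervalIntegral.continuousOn_primitive_interval_left (b := δ) (a := 0)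
      (μ := volume) (f := fun y : ℝ => g (y * I) * cexp (-(y * I * s)))
      (by rw [uIcc_of_le hδ.1.le]; exact (hseg.mul (by fun_prop)).integrableOn_Icc)
    rw [uIcc_of_le hδ.1.le] at hcont
    exact (hcont 0 (left_mem_Icc.2 hδ.1.le)).mono_of_mem_nhdsWithin (Icc_mem_nhdsGT hδ.1)
  have hexp : Tendsto (fun ε : ℝ => cexp (ε * I * s)) (𝓝[>] 0) (𝓝 1) := by
    simpa using ((by fun_prop : Continuous fun ε : ℝ => cexp (ε * I * s)).tendsto 0).mono_left
      nhdsWithin_le_nhds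
  simpa using (((hsegment.const_mul I).const_add (rayIntegral g δ s)).mul hexp).congr'
    (hshift.mono fun ε h => h.symm)

end Strip

theorem upper_sum_exists_and_analytic_general
    (ρ R A : ℝ) (hρ : 0 < ρ) (hR : 0 < R) (g : ℂ → ℂ)
    (hg : DifferentiableOn ℂ g
      ({t : ℂ | 0 < t.im ∧ -ρ < t.re} ∪ {t : ℂ | ‖t‖ < ρ}))
    (hbound : ∀ t : ℝ, 0 < t → ∀ η : ℝ, η ∈ Set.Ioo 0 ρ →
      ‖g ((t : ℂ) + (η : ℂ) * Complex.I)‖ ≤ A * η⁻¹ * Real.exp (t / R)) :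
    ∃ Φ : ℂ → ℂ,
      (∀ z ∈ {z : ℂ | 1 / R < (1 / z).re},
        Filter.Tendsto
          (fun ε : ℝ => (1 / z) *
            ∫ t in Set.Ioi (0:ℝ),
              g ((t : ℂ) + (ε : ℂ) * Complex.I) * Complex.exp (-(t : ℂ) / z))
          (nhdsWithin 0 (Set.Ioi 0)) (nhds (Φ z))) ∧
      DifferentiableOn ℂ Φ {z : ℂ | 1 / R < (1 / z).re} := by
  have hδ : ρ / 2 ∈ Ioo 0 ρ := ⟨half_pos hρ, half_lt_self hρ⟩
  have hquad : DifferentiableOn ℂ g {w : ℂ | 0 ≤ w.re ∧ 0 < w.im} :=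
    hg.mono fun w hw => Or.inl ⟨hw.2, by linarith [hw.1]⟩
  have hseg : ContinuousOn (fun y : ℝ => g (y * I)) (Icc 0 (ρ / 2)) :=
    hg.continuousOn.comp (by fun_prop) fun y hy => Or.inr <| by
      simpa [abs_of_nonneg hy.1] using hy.2.trans_lt hδ.2
  refine ⟨fun z =>
      1 / z * (rayIntegral g (ρ / 2) (1 / z) + I * segmentIntegral g 0 (ρ / 2) (1 / z)),
    fun z hz => ?_, fun z hz => ?_⟩
  · simp_rw [integral_mul_cexp_neg_div_eq_rayIntegral]
    exact (tendsto_rayIntegral_mul_cexp hquad hbound hδ hseg hz).const_mul (1 / z)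
  · have hz0 : z ≠ 0 := by
      rintro rfl
      have h : 1 / R < ((1 : ℂ) / 0).re := hz
      rw [div_zero, zero_re] at h
      exact (one_div_pos.2 hR).not_gt h
    have hinv : DifferentiableAt ℂ (fun z : ℂ => 1 / z) z :=
      (differentiableAt_const _).div differentiableAt_id hz0
    refine (hinv.mul ?_).differentiableWithinAt
    exact ((differentiableAt_rayIntegral hquad.continuousOn hbound hδ hz).comp z hinv).add
      (((differentiable_segmentIntegral hδ.1.le hseg) (1 / z)).comp z hinv |>.const_mul I)

/-- Existence and analyticity part of the fundamental criterion for distributional Borel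
summability (Caliceti–Grecchi–Maioli): if `g` is holomorphic on
`Ω = {Im t > 0, Re t > -ρ} ∪ {|t| < ρ}` and satisfies `|g(t+iη)| ≤ A η⁻¹ e^{t/R}` for all
`t > 0`, `η ∈ (0,ρ)`, then for every `z` in the disk `C_R = {Re (1/z) > 1/R}` the one-sided
limit `Φ(z) = lim_{ε→0⁺} (1/z) ∫₀^∞ g(t+iε) e^{-t/z} dt` exists, and `Φ` is holomorphic
on `C_R`. -/
theorem upper_sum_exists_and_analytic
    (ρ R A : ℝ) (hρ : 0 < ρ) (hR : 0 < R) (hA : 0 < A) (g : ℂ → ℂ)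
    (hg : DifferentiableOn ℂ g
      ({t : ℂ | 0 < t.im ∧ -ρ < t.re} ∪ {t : ℂ | ‖t‖ < ρ}))
    (hbound : ∀ t : ℝ, 0 < t → ∀ η : ℝ, η ∈ Set.Ioo 0 ρ →
      ‖g ((t : ℂ) + (η : ℂ) * Complex.I)‖ ≤ A * η⁻¹ * Real.exp (t / R)) :
    ∃ Φ : ℂ → ℂ,
      (∀ z ∈ {z : ℂ | 1 / R < (1 / z).re},
        Filter.Tendsto
          (fun ε : ℝ => (1 / z) *
            ∫ t in Set.Ioi (0:ℝ),
              g ((t : ℂ) + (ε : ℂ) * Complex.I) * Complex.exp (-(t : ℂ) / z))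
          (nhdsWithin 0 (Set.Ioi 0)) (nhds (Φ z))) ∧
      DifferentiableOn ℂ Φ {z : ℂ | 1 / R < (1 / z).re} :=
  upper_sum_exists_and_analytic_general ρ R A hρ hR g hg hbound
end

section
/- For every β in the open first quadrant {β ∈ ℂ : 0 < arg β < π/2}, the integral Φ(β) := (1/(8π²)) ∫₀^∞ (e^{−t}/t³)·[2√π β t · cot(2√π β t) − 1 + (4π/3) β² t²] dt converges absolutely, and the function β ↦ Φ(β) is holomorphic on the open first quadrant. -/
/-!
For `t > 0` and `0 < Im β` the point `2√π β t` avoids the real zeros of `sin`, so the integrand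
is holomorphic in `β` on the upper half-plane. It equals `e^{-t} t^{-3} g(2√π β t)` with
`g z = z cot z - 1 + z² / 3`. The Taylor bounds for `sin` and `cos` give `‖g z‖ ≤ ‖z‖⁴ / 4` on the
unit disc, and `cot` is bounded on `y₀ ≤ Im z`; hence `‖g z‖ ≤ C_κ ‖z‖³` on every sector
`κ ‖z‖ ≤ Im z`, and the integrand is dominated by `C e^{-t}` locally uniformly in `β`. Cauchy's
estimate turns this into a domination of the `β`-derivative, and differentiation under the
integral sign gives holomorphy.
-/

open MeasureTheory Filter

/-- The integrand of the rotated effective action `Φ(β)`. -/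
noncomputable def phiIntegrand (β : ℂ) (t : ℝ) : ℂ :=
  (Complex.exp (-(t : ℂ)) / (t : ℂ) ^ 3) *
    (2 * (Real.sqrt Real.pi : ℂ) * β * (t : ℂ) *
        Complex.cot (2 * (Real.sqrt Real.pi : ℂ) * β * (t : ℂ))
      - 1 + 4 * (Real.pi : ℂ) * β ^ 2 * (t : ℂ) ^ 2 / 3)

/-- The rotated effective action
`Φ(β) = (1/(8π²)) ∫₀^∞ (e^{-t}/t³)[2√π β t cot(2√π β t) - 1 + (4π/3)β²t²] dt`. -/
noncomputable def PhiRot (β : ℂ) : ℂ :=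
  (1 / (8 * (Real.pi : ℂ) ^ 2)) * ∫ t in Set.Ioi (0:ℝ), phiIntegrand β t

open Metric Set Complex Topology

section ParametricHolomorphy

variable {α E : Type*} [MeasurableSpace α] {μ : Measure α} [NormedAddCommGroup E]
  [NormedSpace ℂ E]

theorem aestronglyMeasurable_deriv_of_differentiableAt {F : ℂ → α → E} {z₀ : ℂ} {U : Set ℂ}
    (hU : U ∈ 𝓝 z₀) (hF_meas : ∀ z ∈ U, AEStronglyMeasurable (F z) μ)
    (hF_diff : ∀ᵐ a ∂μ, DifferentiableAt ℂ (F · a) z₀) :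
    AEStronglyMeasurable (fun a => deriv (F · a) z₀) μ := by
  classical
  -- difference quotients, set to `0` where they are not known to be measurable
  let q : ℂ → α → E := fun h a => if z₀ + h ∈ U then h⁻¹ • (F (z₀ + h) a - F z₀ a) else 0
  refine aestronglyMeasurable_of_tendsto_ae (𝓝[≠] (0 : ℂ)) (f := q) (fun h => ?_) ?_
  · by_cases hh : z₀ + h ∈ U
    · simp only [q, hh, if_true]
      exact ((hF_meas _ hh).sub (hF_meas _ (mem_of_mem_nhds hU))).const_smul _
    · simp only [q, hh, if_false]
      exact aestronglyMeasurable_const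
  · filter_upwards [hF_diff] with a ha
    refine ha.hasDerivAt.tendsto_slope_zero.congr' ?_
    have : ∀ᶠ h in 𝓝 (0 : ℂ), z₀ + h ∈ U :=
      (continuous_const_add z₀).continuousAt.preimage_mem_nhds (by simpa using hU)
    filter_upwards [nhdsWithin_le_nhds this] with h hh
    simp [q, hh]

theorem differentiableOn_integral_of_locally_dominated {F : ℂ → α → E} {U : Set ℂ}
    (hU : IsOpen U) (hF_meas : ∀ z ∈ U, AEStronglyMeasurable (F z) μ)
    (hF_diff : ∀ᵐ a ∂μ, DifferentiableOn ℂ (F · a) U)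
    (hF_bound : ∀ z ∈ U, ∃ r > 0, ∃ bound : α → ℝ, Integrable bound μ ∧
      ∀ᵐ a ∂μ, ∀ w ∈ ball z r, ‖F w a‖ ≤ bound a) :
    DifferentiableOn ℂ (fun z => ∫ a, F z a ∂μ) U := by
  intro z₀ hz₀
  obtain ⟨r, hr, bound, hbound_int, hbound⟩ := hF_bound z₀ hz₀
  obtain ⟨ε, hε, hεU⟩ := isOpen_iff.1 hU z₀ hz₀
  set ρ := min ε r / 3
  have hρ : 0 < ρ := by positivity
  have hdisc : ∀ z ∈ ball z₀ ρ, closedBall z ρ ⊆ U ∩ ball z₀ r := by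
    intro z hz w hw
    have : dist w z₀ < min ε r :=
      calc dist w z₀ ≤ dist w z + dist z z₀ := dist_triangle _ _ _
        _ < ρ + ρ := add_lt_add_of_le_of_lt (mem_closedBall.1 hw) (mem_ball.1 hz)
        _ < min ε r := by linarith [lt_min hε hr, show ρ = min ε r / 3 from rfl]
    exact ⟨hεU (mem_ball.2 (this.trans_le (min_le_left _ _))),
      mem_ball.2 (this.trans_le (min_le_right _ _))⟩
  have hball_U : ball z₀ ρ ⊆ U := fun z hz => (hdisc z hz (mem_closedBall_self hρ.le)).1
  have hF_int : Integrable (F z₀) μ :=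
    hbound_int.mono' (hF_meas z₀ hz₀) (hbound.mono fun a ha => ha z₀ (mem_ball_self hr))
  have hderiv_bound : ∀ᵐ a ∂μ, ∀ z ∈ ball z₀ ρ, ‖deriv (F · a) z‖ ≤ bound a / ρ := by
    filter_upwards [hF_diff, hbound] with a hda hba z hz
    refine Complex.norm_deriv_le_of_forall_mem_sphere_norm_le hρ
      (hda.diffContOnCl_ball fun w hw => (hdisc z hz hw).1) fun w hw => hba w ?_
    exact (hdisc z hz (sphere_subset_closedBall hw)).2
  have hdiff : ∀ᵐ a ∂μ, ∀ z ∈ ball z₀ ρ, HasDerivAt (F · a) (deriv (F · a) z) z := by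
    filter_upwards [hF_diff] with a hda z hz
    exact (hda.differentiableAt (hU.mem_nhds (hball_U hz))).hasDerivAt
  have hF'_meas : AEStronglyMeasurable (fun a => deriv (F · a) z₀) μ :=
    aestronglyMeasurable_deriv_of_differentiableAt (hU.mem_nhds hz₀) hF_meas
      (hF_diff.mono fun a ha => ha.differentiableAt (hU.mem_nhds hz₀))
  exact (hasDerivAt_integral_of_dominated_loc_of_deriv_le (ball_mem_nhds z₀ hρ)
    (eventually_of_mem (hU.mem_nhds hz₀) hF_meas) hF_int hF'_meas hderiv_bound
    (hbound_int.div_const ρ) hdiff).2.differentiableAt.differentiableWithinAt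

end ParametricHolomorphy

namespace Complex

theorem sin_ne_zero_of_im_ne_zero {z : ℂ} (hz : z.im ≠ 0) : sin z ≠ 0 :=
  sin_ne_zero_iff.2 fun k hk => hz (by simp [hk])

theorem im_pos_of_arg_pos_of_arg_lt_pi {β : ℂ} (h₀ : 0 < β.arg) (hπ : β.arg < Real.pi) :
    0 < β.im := by
  have hβ : β ≠ 0 := by rintro rfl; simp at h₀
  rw [← norm_mul_sin_arg]
  exact mul_pos (norm_pos_iff.2 hβ) (Real.sin_pos_of_pos_of_lt_pi h₀ hπ)

theorem norm_cot_le_of_le_im {y₀ : ℝ} (hy₀ : 0 < y₀) {z : ℂ} (hz : y₀ ≤ z.im) :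
    ‖cot z‖ ≤ 2 / (1 - Real.exp (-2 * y₀)) := by
  have hq : ‖exp (2 * I * z)‖ ≤ Real.exp (-2 * y₀) := by
    rw [norm_exp, show (2 * I * z).re = -2 * z.im by simp]
    exact Real.exp_le_exp.2 (by linarith)
  have hq1 : Real.exp (-2 * y₀) < 1 := Real.exp_lt_one_iff.2 (by linarith)
  rw [cot_eq_exp_ratio, norm_div, norm_mul, norm_I, one_mul]
  apply div_le_div₀ zero_le_two
  · calc ‖exp (2 * I * z) + 1‖ ≤ ‖exp (2 * I * z)‖ + ‖(1 : ℂ)‖ := norm_add_le _ _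
      _ ≤ 2 := by rw [norm_one]; linarith
  · linarith
  · calc 1 - Real.exp (-2 * y₀) ≤ ‖(1 : ℂ)‖ - ‖exp (2 * I * z)‖ := by rw [norm_one]; linarith
      _ ≤ ‖1 - exp (2 * I * z)‖ := norm_sub_norm_le _ _

theorem mul_norm_le_norm_sin {z : ℂ} (hz : ‖z‖ ≤ 1) : 4 / 5 * ‖z‖ ≤ ‖sin z‖ := by
  have hS := sin_bound hz
  have h3 : ‖z‖ ^ 3 ≤ ‖z‖ := pow_le_of_le_one (norm_nonneg z) hz (by norm_num)
  have h5 : ‖z‖ ^ 5 ≤ ‖z‖ := pow_le_of_le_one (norm_nonneg z) hz (by norm_num)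
  have : ‖z‖ ≤ ‖sin z‖ + ‖z‖ ^ 3 / 6 + ‖z‖ ^ 5 / 100 := by
    calc ‖z‖ = ‖sin z + z ^ 3 / 6 - (sin z - (z - z ^ 3 / 6))‖ := by ring_nf
      _ ≤ ‖sin z‖ + ‖z ^ 3 / 6‖ + ‖sin z - (z - z ^ 3 / 6)‖ :=
        (norm_sub_le _ _).trans (by gcongr; exact norm_add_le _ _)
      _ ≤ _ := by rw [norm_div, norm_pow]; norm_num; linarith
  linarith [norm_nonneg z]

end Complex

/-- The remainder of `z cot z = 1 - z² / 3 + O(z⁴)`. -/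
noncomputable def cotRemainder (z : ℂ) : ℂ := z * cot z - 1 + z ^ 2 / 3

theorem differentiableAt_cotRemainder {z : ℂ} (hz : sin z ≠ 0) :
    DifferentiableAt ℂ cotRemainder z := by
  have hcot : DifferentiableAt ℂ cot z := by
    simp_rw [show cot = fun w => cos w / sin w from funext cot_eq_cos_div_sin]
    exact differentiableAt_cos.div differentiableAt_sin hz
  unfold cotRemainder
  fun_prop

theorem norm_cotRemainder_le_of_norm_le_one {z : ℂ} (hz₀ : z ≠ 0) (hz : ‖z‖ ≤ 1) :
    ‖cotRemainder z‖ ≤ ‖z‖ ^ 4 / 4 := by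
  have hsin := mul_norm_le_norm_sin hz
  have hpos : 0 < ‖z‖ := norm_pos_iff.2 hz₀
  have hsin₀ : sin z ≠ 0 := norm_pos_iff.1 (by linarith)
  set C := cos z - (1 - z ^ 2 / 2)
  set S := sin z - (z - z ^ 3 / 6)
  have hC : ‖C‖ ≤ ‖z‖ ^ 4 * (5 / 96) := cos_bound hz
  have hS : ‖S‖ ≤ ‖z‖ ^ 5 / 100 := sin_bound hz
  -- the Taylor terms of `z cos z - sin z + z² sin z / 3` cancel up to order 4
  have hnum : cotRemainder z * sin z = z * C + (z ^ 2 / 3 - 1) * S - z ^ 5 / 18 := by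
    simp only [cotRemainder, cot_eq_cos_div_sin, C, S]
    field_simp
    ring
  have hz2 : ‖z ^ 2 / 3 - 1‖ ≤ 4 / 3 := by
    calc ‖z ^ 2 / 3 - 1‖ ≤ ‖z ^ 2 / 3‖ + ‖(1 : ℂ)‖ := norm_sub_le _ _
      _ ≤ 4 / 3 := by
        rw [norm_div, norm_pow, norm_one]; norm_num
        nlinarith [pow_le_one₀ (norm_nonneg z) hz (n := 2)]
  have hnum_le : ‖cotRemainder z * sin z‖ ≤ ‖z‖ ^ 5 / 8 := by
    rw [hnum]
    calc ‖z * C + (z ^ 2 / 3 - 1) * S - z ^ 5 / 18‖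
        ≤ ‖z‖ * ‖C‖ + ‖z ^ 2 / 3 - 1‖ * ‖S‖ + ‖z‖ ^ 5 / 18 := by
          refine (norm_sub_le _ _).trans ?_
          rw [norm_div, norm_pow]
          gcongr
          · exact (norm_add_le _ _).trans (by rw [norm_mul, norm_mul])
          · norm_num
      _ ≤ ‖z‖ * (‖z‖ ^ 4 * (5 / 96)) + 4 / 3 * (‖z‖ ^ 5 / 100) + ‖z‖ ^ 5 / 18 := by gcongr
      _ ≤ ‖z‖ ^ 5 / 8 := by nlinarith [pow_pos hpos 5]
  rw [norm_mul] at hnum_le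
  have : ‖cotRemainder z‖ * (4 / 5 * ‖z‖) ≤ ‖z‖ ^ 4 / 4 * (4 / 5 * ‖z‖) :=
    calc ‖cotRemainder z‖ * (4 / 5 * ‖z‖) ≤ ‖cotRemainder z‖ * ‖sin z‖ := by gcongr
      _ ≤ ‖z‖ ^ 5 / 8 := hnum_le
      _ ≤ ‖z‖ ^ 4 / 4 * (4 / 5 * ‖z‖) := by nlinarith [pow_pos hpos 5]
  exact le_of_mul_le_mul_right this (by positivity)

theorem norm_cotRemainder_le_of_mul_norm_le_im {κ : ℝ} (hκ : 0 < κ) {z : ℂ} (hz₀ : z ≠ 0)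
    (hz : κ * ‖z‖ ≤ z.im) :
    ‖cotRemainder z‖ ≤ (2 / (1 - Real.exp (-2 * κ)) + 4 / 3) * ‖z‖ ^ 3 := by
  have hM : 0 ≤ 2 / (1 - Real.exp (-2 * κ)) :=
    div_nonneg zero_le_two (by linarith [Real.exp_lt_one_iff.2 (by linarith : -2 * κ < 0)])
  have hn := norm_nonneg z
  rcases le_total ‖z‖ 1 with hz1 | hz1
  · have h43 : ‖z‖ ^ 4 ≤ ‖z‖ ^ 3 := pow_le_pow_of_le_one hn hz1 (by norm_num)
    calc ‖cotRemainder z‖ ≤ ‖z‖ ^ 4 / 4 := norm_cotRemainder_le_of_norm_le_one hz₀ hz1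
      _ ≤ _ := by nlinarith [pow_nonneg hn 3]
  · have hcot := norm_cot_le_of_le_im hκ (by nlinarith)
    have h12 : ‖z‖ ≤ ‖z‖ ^ 3 := le_self_pow₀ hz1 (by norm_num)
    have h13 : 1 ≤ ‖z‖ ^ 3 := one_le_pow₀ hz1
    have h23 : ‖z‖ ^ 2 ≤ ‖z‖ ^ 3 := pow_le_pow_right₀ hz1 (by norm_num)
    calc ‖cotRemainder z‖ ≤ ‖z‖ * ‖cot z‖ + 1 + ‖z‖ ^ 2 / 3 := by
          unfold cotRemainder
          refine (norm_add_le _ _).trans ?_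
          rw [norm_div, norm_pow, ← norm_mul]
          gcongr
          · exact (norm_sub_le _ _).trans (by rw [norm_one])
          · norm_num
      _ ≤ ‖z‖ * (2 / (1 - Real.exp (-2 * κ))) + 1 + ‖z‖ ^ 2 / 3 := by gcongr
      _ ≤ _ := by nlinarith

theorem phiIntegrand_eq (β : ℂ) (t : ℝ) :
    phiIntegrand β t =
      exp (-(t : ℂ)) / (t : ℂ) ^ 3 * cotRemainder (2 * (Real.sqrt Real.pi : ℂ) * β * t) := by
  have hπ : ((Real.sqrt Real.pi : ℝ) : ℂ) ^ 2 = Real.pi := by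
    rw [← ofReal_pow, Real.sq_sqrt Real.pi_pos.le]
  rw [phiIntegrand, cotRemainder]
  linear_combination exp (-(t : ℂ)) / (t : ℂ) ^ 3 * (-4 / 3 * β ^ 2 * (t : ℂ) ^ 2) * hπ

theorem sin_two_sqrt_pi_mul_ne_zero {β : ℂ} (hβ : 0 < β.im) {t : ℝ} (ht : 0 < t) :
    sin (2 * (Real.sqrt Real.pi : ℂ) * β * t) ≠ 0 := by
  apply sin_ne_zero_of_im_ne_zero
  simp [hβ.ne', ht.ne', (Real.sqrt_pos.2 Real.pi_pos).ne']

theorem continuousOn_phiIntegrand {β : ℂ} (hβ : 0 < β.im) :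
    ContinuousOn (phiIntegrand β) (Ioi 0) := by
  intro t (ht : 0 < t)
  simp_rw [funext (phiIntegrand_eq β)]
  have ht₀ : (t : ℂ) ≠ 0 := ofReal_ne_zero.2 ht.ne'
  refine ContinuousAt.continuousWithinAt ?_
  refine ContinuousAt.mul (by fun_prop (disch := simp [ht₀])) ?_
  exact (differentiableAt_cotRemainder (sin_two_sqrt_pi_mul_ne_zero hβ ht)).continuousAt.comp
    (f := fun t : ℝ => 2 * (Real.sqrt Real.pi : ℂ) * β * t) (by fun_prop)

theorem differentiableAt_phiIntegrand {β : ℂ} (hβ : 0 < β.im) {t : ℝ} (ht : 0 < t) :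
    DifferentiableAt ℂ (phiIntegrand · t) β := by
  simp_rw [phiIntegrand_eq]
  exact ((differentiableAt_cotRemainder (sin_two_sqrt_pi_mul_ne_zero hβ ht)).comp β
    (f := fun β : ℂ => 2 * (Real.sqrt Real.pi : ℂ) * β * t) (by fun_prop)).const_mul _

theorem norm_phiIntegrand_le {κ R : ℝ} (hκ : 0 < κ) {β : ℂ} (hβ : β ≠ 0)
    (hβκ : κ * ‖β‖ ≤ β.im) (hβR : ‖β‖ ≤ R) {t : ℝ} (ht : 0 < t) :
    ‖phiIntegrand β t‖ ≤
      (2 / (1 - Real.exp (-2 * κ)) + 4 / 3) * (2 * Real.sqrt Real.pi * R) ^ 3 * Real.exp (-t) := by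
  set w := 2 * (Real.sqrt Real.pi : ℂ) * β * t
  have hs := Real.sqrt_pos.2 Real.pi_pos
  have hw : ‖w‖ = 2 * Real.sqrt Real.pi * ‖β‖ * t := by
    simp [w, abs_of_pos hs, abs_of_pos ht]
  have hw_im : w.im = 2 * Real.sqrt Real.pi * β.im * t := by simp [w]
  have hw₀ : w ≠ 0 := by simp [w, hβ, ht.ne', hs.ne']
  have hκw : κ * ‖w‖ ≤ w.im := by
    rw [hw, hw_im]
    have := mul_le_mul_of_nonneg_left hβκ (by positivity : 0 ≤ 2 * Real.sqrt Real.pi * t)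
    linarith
  have hM : 0 ≤ 2 / (1 - Real.exp (-2 * κ)) + 4 / 3 := by
    have := Real.exp_lt_one_iff.2 (by linarith : -2 * κ < 0)
    have : 0 ≤ 2 / (1 - Real.exp (-2 * κ)) := div_nonneg zero_le_two (by linarith)
    linarith
  rw [phiIntegrand_eq, norm_mul, norm_div, norm_pow, ← ofReal_neg, norm_exp_ofReal, norm_real,
    Real.norm_of_nonneg ht.le]
  calc Real.exp (-t) / t ^ 3 * ‖cotRemainder w‖
      ≤ Real.exp (-t) / t ^ 3 * ((2 / (1 - Real.exp (-2 * κ)) + 4 / 3) * ‖w‖ ^ 3) := by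
        gcongr; exact norm_cotRemainder_le_of_mul_norm_le_im hκ hw₀ hκw
    _ = (2 / (1 - Real.exp (-2 * κ)) + 4 / 3) * (2 * Real.sqrt Real.pi * ‖β‖) ^ 3 *
        Real.exp (-t) := by
        rw [hw]; field_simp
    _ ≤ _ := by gcongr

theorem exists_norm_phiIntegrand_le_on_ball {β₀ : ℂ} (hβ₀ : 0 < β₀.im) :
    ∃ C, ∀ β ∈ ball β₀ (β₀.im / 2), ∀ t > 0, ‖phiIntegrand β t‖ ≤ C * Real.exp (-t) := by
  set r := β₀.im / 2
  set R := ‖β₀‖ + r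
  have hr : 0 < r := by positivity
  have hR : 0 < R := by positivity
  refine ⟨(2 / (1 - Real.exp (-2 * (r / R))) + 4 / 3) * (2 * Real.sqrt Real.pi * R) ^ 3,
    fun β hβ t ht => ?_⟩
  have hβ' : ‖β - β₀‖ < r := by rwa [mem_ball, dist_eq] at hβ
  have him : r ≤ β.im := by
    have := (abs_le.1 ((abs_im_le_norm (β - β₀)).trans hβ'.le)).1
    rw [sub_im] at this
    linarith [show r = β₀.im / 2 from rfl]
  have hβR : ‖β‖ ≤ R :=
    calc ‖β‖ = ‖β₀ + (β - β₀)‖ := by rw [add_sub_cancel]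
      _ ≤ R := (norm_add_le _ _).trans (by linarith)
  refine norm_phiIntegrand_le (κ := r / R) (by positivity) ?_ ?_ hβR ht
  · rintro rfl
    simp only [zero_im] at him
    linarith
  · calc r / R * ‖β‖ ≤ r / R * R := by gcongr
      _ ≤ β.im := by rwa [div_mul_cancel₀ _ hR.ne']

theorem integrableOn_phiIntegrand {β : ℂ} (hβ : 0 < β.im) :
    IntegrableOn (phiIntegrand β) (Ioi 0) := by
  obtain ⟨C, hC⟩ := exists_norm_phiIntegrand_le_on_ball hβ
  refine ((integrableOn_exp_neg_Ioi 0).const_mul C).mono'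
    ((continuousOn_phiIntegrand hβ).aestronglyMeasurable measurableSet_Ioi) ?_
  filter_upwards [ae_restrict_mem measurableSet_Ioi] with t ht
  exact hC β (mem_ball_self (by positivity)) t ht

theorem differentiableOn_integral_phiIntegrand :
    DifferentiableOn ℂ (fun β => ∫ t in Ioi 0, phiIntegrand β t) {β | 0 < β.im} := by
  refine differentiableOn_integral_of_locally_dominated (isOpen_lt continuous_const continuous_im)
    (fun β hβ => (continuousOn_phiIntegrand hβ).aestronglyMeasurable measurableSet_Ioi) ?_ ?_
  · filter_upwards [ae_restrict_mem measurableSet_Ioi] with t ht β hβ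
    exact (differentiableAt_phiIntegrand hβ ht).differentiableWithinAt
  · intro β₀ hβ₀
    obtain ⟨C, hC⟩ := exists_norm_phiIntegrand_le_on_ball hβ₀
    refine ⟨β₀.im / 2, by simpa using hβ₀, fun t => C * Real.exp (-t),
      (integrableOn_exp_neg_Ioi 0).const_mul C, ?_⟩
    filter_upwards [ae_restrict_mem measurableSet_Ioi] with t ht β hβ
    exact hC β hβ t ht

/-- For every `β` in the open first quadrant the integral defining `Φ(β)` converges
absolutely, and `β ↦ Φ(β)` is holomorphic on the open first quadrant. -/
theorem phi_integrable_and_holomorphic :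
    (∀ β : ℂ, 0 < β.arg → β.arg < Real.pi / 2 →
      MeasureTheory.IntegrableOn (fun t : ℝ => phiIntegrand β t) (Set.Ioi 0)) ∧
    DifferentiableOn ℂ PhiRot {β : ℂ | 0 < β.arg ∧ β.arg < Real.pi / 2} := by
  have hquadrant : ∀ β : ℂ, 0 < β.arg → β.arg < Real.pi / 2 → 0 < β.im := fun β h₀ h₁ =>
    im_pos_of_arg_pos_of_arg_lt_pi h₀ (h₁.trans (by linarith [Real.pi_pos]))
  refine ⟨fun β h₀ h₁ => integrableOn_phiIntegrand (hquadrant β h₀ h₁), ?_⟩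
  exact (differentiableOn_integral_phiIntegrand.const_mul _).mono fun β hβ => hquadrant β hβ.1 hβ.2
end
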